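/- arXiv:1505.07434 — 2 statements merged into one kernel-verified Lean document; each statement's English description precedes it below -/
import Mathlib

section
/- Monotonicity and unit sensitivity of the maximum allocation value (used in the progressive-filling IMaxFlow algorithm): writing Z_max(n) for the maximum of Z(π) over allocations feasible with respect to capacities n, if n k t ≤ n' k t for all k and t, then Z_max(n) ≤ Z_max(n'); and if n' is obtained from n by increasing a single entry n k0 t0 by exactly 1, then Z_max(n') ≤ Z_max(n) + 1. -/
/-- A feasible allocation: every assigned triple was bid on, every job is
assigned at most once, and capacities are respected. -/
def Feasible {J T K : Type*} [DecidableEq J] [DecidableEq T] [DecidableEq K]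
    (b : J → T → K → Prop) (n : K → T → ℕ) (π : Finset (J × T × K)) : Prop :=
  (∀ x ∈ π, b x.1 x.2.1 x.2.2) ∧
  (∀ j : J, (π.filter (fun x => x.1 = j)).card ≤ 1) ∧
  (∀ (k : K) (t : T), (π.filter (fun x => x.2.1 = t ∧ x.2.2 = k)).card ≤ n k t)

/-- Number of jobs a company `k` receives in allocation `π`. -/
def alloc {J T K : Type*} [DecidableEq K]
    (π : Finset (J × T × K)) (k : K) : ℕ :=
  (π.filter (fun x => x.2.2 = k)).card

/-- Total compensation of an allocation. -/
def cost {J T K : Type*} (c : J → T → K → ℕ) (π : Finset (J × T × K)) : ℕ :=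
  ∑ x ∈ π, c x.1 x.2.1 x.2.2

/-- The maximum number of allocatable jobs. -/
noncomputable def Zmax {J T K : Type*} [DecidableEq J] [DecidableEq T] [DecidableEq K]
    (b : J → T → K → Prop) (n : K → T → ℕ) : ℕ :=
  sSup {z | ∃ π : Finset (J × T × K), Feasible b n π ∧ π.card = z}

/-- The allocation vector of `π` sorted in nondecreasing order. -/
def sortedVec {J T K : Type*} [Fintype K] [DecidableEq K]
    (π : Finset (J × T × K)) : List ℕ :=
  Multiset.sort (Finset.univ.val.map (fun k => alloc π k)) (· ≤ ·)

/-- `π` is a max-lexmin fair maximum allocation. -/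
noncomputable def MaxLexminFair {J T K : Type*} [Fintype K]
    [DecidableEq J] [DecidableEq T] [DecidableEq K]
    (b : J → T → K → Prop) (n : K → T → ℕ) (π : Finset (J × T × K)) : Prop :=
  Feasible b n π ∧ π.card = Zmax b n ∧
    ∀ π' : Finset (J × T × K), Feasible b n π' → π'.card = Zmax b n →
      sortedVec π' = sortedVec π ∨ List.Lex (· < ·) (sortedVec π') (sortedVec π)


/-! Raising capacities only enlarges the set of feasible allocations. If a single capacity
grows by one, an allocation feasible for the new capacities overfills that cell by at most
one job, and dropping such a job leaves an allocation feasible for the old ones. -/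

def cellCount {J T K : Type*} [DecidableEq T] [DecidableEq K]
    (π : Finset (J × T × K)) (k : K) (t : T) : ℕ :=
  (π.filter (fun x => x.2.1 = t ∧ x.2.2 = k)).card

theorem cellCount_mono {J T K : Type*} [DecidableEq T] [DecidableEq K]
    {π π' : Finset (J × T × K)} (hsub : π' ⊆ π) (k : K) (t : T) :
    cellCount π' k t ≤ cellCount π k t :=
  Finset.card_le_card (Finset.filter_subset_filter _ hsub)

theorem cellCount_erase_of_mem {J T K : Type*} [DecidableEq J] [DecidableEq T] [DecidableEq K]
    {π : Finset (J × T × K)} {x : J × T × K} {k : K} {t : T}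
    (hx : x ∈ π) (ht : x.2.1 = t) (hk : x.2.2 = k) :
    cellCount (π.erase x) k t = cellCount π k t - 1 := by
  rw [cellCount, Finset.filter_erase,
    Finset.card_erase_of_mem (Finset.mem_filter.2 ⟨hx, ht, hk⟩), cellCount]

namespace Feasible

variable {J T K : Type*} [DecidableEq J] [DecidableEq T] [DecidableEq K]
  {b : J → T → K → Prop} {n n' : K → T → ℕ} {π π' : Finset (J × T × K)}

theorem empty : Feasible b n (∅ : Finset (J × T × K)) := by
  simp [Feasible]

theorem subset (h : Feasible b n π) (hsub : π' ⊆ π) : Feasible b n π' :=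
  ⟨fun x hx => h.1 x (hsub hx),
    fun j => (Finset.card_le_card (Finset.filter_subset_filter _ hsub)).trans (h.2.1 j),
    fun k t => (cellCount_mono hsub k t).trans (h.2.2 k t)⟩

theorem of_cellCount_le (h : Feasible b n π) (hcap : ∀ k t, cellCount π k t ≤ n' k t) :
    Feasible b n' π :=
  ⟨h.1, h.2.1, hcap⟩

theorem mono (h : Feasible b n π) (hle : ∀ k t, n k t ≤ n' k t) : Feasible b n' π :=
  h.of_cellCount_le fun k t => (h.2.2 k t).trans (hle k t)

theorem card_le_fintype_card [Fintype J] (h : Feasible b n π) : π.card ≤ Fintype.card J := by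
  refine Finset.card_le_card_of_injOn Prod.fst (fun _ _ => Finset.mem_coe.2 (Finset.mem_univ _))
    fun x hx y hy hxy => ?_
  exact Finset.card_le_one.mp (h.2.1 x.1) x (Finset.mem_filter.2 ⟨hx, rfl⟩) y
    (Finset.mem_filter.2 ⟨hy, hxy.symm⟩)

theorem exists_feasible_card_le_succ (h : Feasible b n' π) (k0 : K) (t0 : T)
    (h0 : n' k0 t0 ≤ n k0 t0 + 1) (hrest : ∀ k t, ¬(k = k0 ∧ t = t0) → n' k t ≤ n k t) :
    ∃ π', Feasible b n π' ∧ π.card ≤ π'.card + 1 := by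
  by_cases hcell : cellCount π k0 t0 ≤ n k0 t0
  · refine ⟨π, h.of_cellCount_le fun k t => ?_, Nat.le_succ _⟩
    by_cases hkt : k = k0 ∧ t = t0
    · obtain ⟨rfl, rfl⟩ := hkt
      exact hcell
    · exact (h.2.2 k t).trans (hrest k t hkt)
  · obtain ⟨x, hx⟩ : (π.filter (fun x => x.2.1 = t0 ∧ x.2.2 = k0)).Nonempty :=
      Finset.card_pos.1 (by unfold cellCount at hcell; omega)
    obtain ⟨hxπ, ht, hk⟩ := Finset.mem_filter.1 hx
    refine ⟨π.erase x, (h.subset (Finset.erase_subset x π)).of_cellCount_le fun k t => ?_,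
      by rw [Finset.card_erase_of_mem hxπ]; omega⟩
    by_cases hkt : k = k0 ∧ t = t0
    · obtain ⟨rfl, rfl⟩ := hkt
      have hfull : cellCount π k t ≤ n' k t := h.2.2 k t
      rw [cellCount_erase_of_mem hxπ ht hk]
      omega
    · exact (cellCount_mono (Finset.erase_subset x π) k t).trans
        ((h.2.2 k t).trans (hrest k t hkt))

end Feasible

section Zmax

variable {J T K : Type*} [DecidableEq J] [DecidableEq T] [DecidableEq K]
  {b : J → T → K → Prop} {n : K → T → ℕ}

theorem card_le_Zmax [Fintype J] {π : Finset (J × T × K)} (h : Feasible b n π) :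
    π.card ≤ Zmax b n :=
  le_csSup ⟨Fintype.card J, by rintro _ ⟨π, hπ, rfl⟩; exact hπ.card_le_fintype_card⟩ ⟨π, h, rfl⟩

theorem Zmax_le {m : ℕ} (h : ∀ π : Finset (J × T × K), Feasible b n π → π.card ≤ m) :
    Zmax b n ≤ m :=
  csSup_le ⟨0, ∅, Feasible.empty, rfl⟩ (by rintro _ ⟨π, hπ, rfl⟩; exact h π hπ)

end Zmax

theorem Zmax_monotone_and_unit_sensitive_general {J T K : Type*}
    [Fintype J]
    [DecidableEq J] [DecidableEq T] [DecidableEq K]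
    (b : J → T → K → Prop) (n n' : K → T → ℕ) :
    ((∀ (k : K) (t : T), n k t ≤ n' k t) → Zmax b n ≤ Zmax b n') ∧
    (∀ (k0 : K) (t0 : T), n' k0 t0 = n k0 t0 + 1 →
      (∀ (k : K) (t : T), ¬(k = k0 ∧ t = t0) → n' k t = n k t) →
      Zmax b n' ≤ Zmax b n + 1) := by
  refine ⟨fun hle => Zmax_le fun π hπ => card_le_Zmax (hπ.mono hle), fun k0 t0 h0 hrest => ?_⟩
  refine Zmax_le fun π hπ => ?_
  obtain ⟨π', hπ', hcard⟩ :=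
    hπ.exists_feasible_card_le_succ k0 t0 h0.le fun k t hkt => (hrest k t hkt).le
  exact hcard.trans (Nat.add_le_add_right (card_le_Zmax hπ') 1)

/-- monotonicity and unit sensitivity of the maximum allocation
value in the capacities. -/
theorem Zmax_monotone_and_unit_sensitive {J T K : Type*}
    [Fintype J] [Fintype T] [Fintype K] [Nonempty J] [Nonempty T] [Nonempty K]
    [DecidableEq J] [DecidableEq T] [DecidableEq K]
    (b : J → T → K → Prop) (n n' : K → T → ℕ) :
    ((∀ (k : K) (t : T), n k t ≤ n' k t) → Zmax b n ≤ Zmax b n') ∧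
    (∀ (k0 : K) (t0 : T), n' k0 t0 = n k0 t0 + 1 →
      (∀ (k : K) (t : T), ¬(k = k0 ∧ t = t0) → n' k t = n k t) →
      Zmax b n' ≤ Zmax b n + 1) :=
  Zmax_monotone_and_unit_sensitive_general b n n'
end

section
/- Lemma 4 (main correctness result, allocation-level form): if π' is a feasible allocation of P' with Z(π') = Z'_max whose cost is minimal among all feasible allocations of P' attaining Z'_max, then its real restriction π is a feasible allocation of P with Z(π) = Z_max that is max-lexmin fair and whose cost is minimal among all max-lexmin fair feasible allocations of P attaining Z_max; in other words, removing the dummy jobs from a minimum-cost maximum allocation of P' yields an optimal solution to the max-lexmin fair minimum cost allocation problem for P. -/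
/-! ## The dummy-augmented instance `P'` of Section 3.2.

Given the max-lexmin fair sorted vector `φf = (φ_1 ≤ … ≤ φ_|K|)` of `P`,
we add `L = φ_|K| - φ_1` dummy layers; layer `l` (`0`-indexed) carries one
dummy time and `#{i : φ_i < φ_1 + l + 1}` dummy jobs of cost `0` that every
company bids on with capacity `1` per dummy time.  In `P'` each company may
receive at most `φ_|K|` jobs in total. -/

/-- Number `L` of dummy layers: largest minus smallest entry of `φf`. -/
def Ldim (φf : List ℕ) : ℕ := φf.getLast! - φf.head!

/-- Number of dummy jobs in (0-indexed) layer `l`: the number of entries of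
`φf` smaller than `φ_1 + (l + 1)`. -/
def layerSize (φf : List ℕ) (l : ℕ) : ℕ :=
  (φf.filter (fun x => x < φf.head! + l + 1)).length

/-- The finite type of dummy jobs: layer `l` carries `layerSize φf l` jobs. -/
abbrev Dummy (φf : List ℕ) : Type := (l : Fin (Ldim φf)) × Fin (layerSize φf l)

/-- Bids of `P'`: the original bids on real jobs at real times, plus a bid of
every company on every dummy job of layer `l` at the dummy time of layer `l`. -/
def bidAug {J T K : Type*} (b : J → T → K → Prop) (φf : List ℕ) :
    (J ⊕ Dummy φf) → (T ⊕ Fin (Ldim φf)) → K → Prop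
  | Sum.inl j, Sum.inl t, k => b j t k
  | Sum.inr d, Sum.inr l, _ => d.1 = l
  | _, _, _ => False

/-- Costs of `P'`: original costs on real triples, `0` on dummy triples. -/
def costAug {J T K : Type*} (c : J → T → K → ℕ) (φf : List ℕ) :
    (J ⊕ Dummy φf) → (T ⊕ Fin (Ldim φf)) → K → ℕ
  | Sum.inl j, Sum.inl t, k => c j t k
  | _, _, _ => 0

/-- Capacities of `P'`: original capacities at real times, capacity `1` for
every company at every dummy time. -/
def capAug {T K : Type*} (n : K → T → ℕ) (φf : List ℕ) :
    K → (T ⊕ Fin (Ldim φf)) → ℕ :=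
  fun k t => match t with
  | Sum.inl t => n k t
  | Sum.inr _ => 1

/-- Feasibility for `P'`: feasibility for the augmented bids and capacities,
together with the requirement that each company receives at most `φ_|K|`
(the largest entry of `φf`) jobs in total. -/
def FeasibleAug {J T K : Type*} [DecidableEq J] [DecidableEq T] [DecidableEq K]
    (b : J → T → K → Prop) (n : K → T → ℕ) (φf : List ℕ)
    (π' : Finset ((J ⊕ Dummy φf) × (T ⊕ Fin (Ldim φf)) × K)) : Prop :=
  Feasible (bidAug b φf) (capAug n φf) π' ∧ ∀ k : K, alloc π' k ≤ φf.getLast!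

/-- The maximum number of allocatable jobs in `P'`. -/
noncomputable def ZmaxAug {J T K : Type*} [DecidableEq J] [DecidableEq T] [DecidableEq K]
    (b : J → T → K → Prop) (n : K → T → ℕ) (φf : List ℕ) : ℕ :=
  sSup {z | ∃ π' : Finset ((J ⊕ Dummy φf) × (T ⊕ Fin (Ldim φf)) × K),
    FeasibleAug b n φf π' ∧ π'.card = z}

/-- Real restriction of an allocation of `P'`: the triples whose job lies in
`J` (feasibility forces their time to lie in `T`), viewed in `J × T × K`. -/
def restrict {J T K D T' : Type*} [DecidableEq J] [DecidableEq T] [DecidableEq K]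
    (π' : Finset ((J ⊕ D) × (T ⊕ T') × K)) : Finset (J × T × K) :=
  π'.filterMap
    (fun x => match x with
      | (Sum.inl j, Sum.inl t, k) => some (j, t, k)
      | _ => none)
    (by rintro ⟨j₁ | d₁, t₁ | l₁, k₁⟩ ⟨j₂ | d₂, t₂ | l₂, k₂⟩ x h₁ h₂ <;>
          simp_all <;> subst h₁ <;> simp_all)

/-- The embedding of real triples into the triples of `P'`. -/
def embTriple {J T K D T' : Type*} (x : J × T × K) : (J ⊕ D) × (T ⊕ T') × K :=
  (Sum.inl x.1, Sum.inl x.2.1, x.2.2)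


/-!
Write `φ_max` for the last entry of `φf`. With layers indexed from `0`, a company holding
`a ∈ [φ_1, φ_max]` real jobs lies below the threshold `φ_1 + l + 1` of exactly `φ_max - a`
layers `l`. As `s_l` counts the entries of `φf` below that threshold, it follows that
`φ_1 + ⋯ + φ_m + Σ_l min (s_l, m) = m φ_max` for every `m ≤ |K|`; for `m = |K|` this reads
`Z_max + |D| = |K| φ_max`.

Giving the dummy jobs of layer `l` to the `s_l` companies below its threshold extends every
max-lexmin fair maximum allocation of `P` to a feasible allocation of `P'` that uses all dummy
jobs, at the same cost, so `Z'_max = Z_max + |D|`. Hence a maximum allocation `π'` of `P'`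
allocates `Z_max` real jobs and fills every company up to `φ_max`. Since in layer `l` any `m`
companies take at most `min (s_l, m)` dummy jobs, the `m` poorest companies of the real
restriction hold at least `φ_1 + ⋯ + φ_m` real jobs. These prefix-sum bounds rule out a
lexicographically smaller sorted vector, so the restriction is max-lexmin fair; and as every
max-lexmin fair maximum allocation extends to `P'` at the same cost, the minimality of `π'`
passes to its restriction.
-/

open Finset hiding restrict

section SortedList

variable {φ : List ℕ}

lemma le_getLast!_of_mem (hs : φ.Pairwise (· ≤ ·)) {x : ℕ} (hx : x ∈ φ) : x ≤ φ.getLast! := by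
  rw [List.getLast!_of_getLast? (List.getLast?_eq_some_getLast (List.ne_nil_of_mem hx))]
  exact hs.rel_getLast hx

lemma lt_length_filter_lt_iff (hs : φ.Pairwise (· ≤ ·)) {v i : ℕ} (hi : i < φ.length) :
    i < (φ.filter (· < v)).length ↔ φ[i] < v := by
  induction φ generalizing i with
  | nil => simp at hi
  | cons a l ih =>
    obtain ⟨ha_le, hs⟩ := List.pairwise_cons.1 hs
    by_cases ha : a < v
    · cases i with
      | zero => simp [ha]
      | succ i => simp [ha, ← ih hs (by simpa using hi)]
    · have hnil : l.filter (· < v) = [] :=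
        List.filter_eq_nil_iff.2 fun x hx => by simpa using le_trans (not_lt.1 ha) (ha_le x hx)
      cases i with
      | zero => simp [ha, hnil]
      | succ i => simpa [ha, hnil] using le_trans (not_lt.1 ha) (ha_le _ (List.getElem_mem _))

end SortedList

lemma List.exists_take_sum_lt_of_lex {ψ φ : List ℕ} (h : List.Lex (· < ·) ψ φ)
    (hlen : ψ.length = φ.length) : ∃ m ≤ ψ.length, (ψ.take m).sum < (φ.take m).sum := by
  induction h with
  | nil => simp at hlen
  | cons _ ih =>
    obtain ⟨m, hm, hlt⟩ := ih (by simpa using hlen)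
    exact ⟨m + 1, by simpa using hm, by simpa using hlt⟩
  | rel hab => exact ⟨1, by simp, by simpa using hab⟩

lemma Fin.card_filter_le_val (L a : ℕ) : #{l : Fin L | a ≤ (l : ℕ)} = L - a := by
  have h := card_filter_add_card_filter_not (s := (univ : Finset (Fin L)))
    (fun l : Fin L => (l : ℕ) < a)
  simp only [Fin.card_filter_val_lt, not_lt, card_univ, Fintype.card_fin] at h
  omega

section Layers

variable {φ : List ℕ}

lemma card_layers_above (a : ℕ) :
    #{l : Fin (Ldim φ) | a < φ.head! + l + 1} = Ldim φ - (a - φ.head!) := by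
  rw [filter_congr (q := fun l : Fin (Ldim φ) => a - φ.head! ≤ (l : ℕ)) fun l _ => by omega]
  exact Fin.card_filter_le_val _ _

lemma card_layers_above_add_le {a : ℕ} (ha : a ≤ φ.getLast!) :
    #{l : Fin (Ldim φ) | a < φ.head! + l + 1} + a ≤ φ.getLast! := by
  rw [card_layers_above, Ldim]
  omega

lemma card_lt_layerSize (hs : φ.Pairwise (· ≤ ·)) {i : ℕ} (hi : i < φ.length) :
    #{l : Fin (Ldim φ) | i < layerSize φ l} = φ.getLast! - φ[i] := by
  have h₁ : φ.head! ≤ φ[i] := hs.head!_le (List.getElem_mem hi)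
  have h₂ : φ[i] ≤ φ.getLast! := le_getLast!_of_mem hs (List.getElem_mem hi)
  simp only [layerSize, lt_length_filter_lt_iff hs hi]
  rw [card_layers_above, Ldim]
  omega

lemma take_sum_add_sum_min_layerSize (hs : φ.Pairwise (· ≤ ·)) {m : ℕ} (hm : m ≤ φ.length) :
    (φ.take m).sum + ∑ l : Fin (Ldim φ), min (layerSize φ l) m = m * φ.getLast! := by
  induction m with
  | zero => simp
  | succ m ih =>
    have hmin : ∀ s : ℕ, min s (m + 1) = min s m + if m < s then 1 else 0 := by
      intro s; split_ifs <;> omega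
    have h₂ : φ[m] ≤ φ.getLast! := le_getLast!_of_mem hs (List.getElem_mem _)
    simp only [hmin, sum_add_distrib, sum_boole, Nat.cast_id, card_lt_layerSize hs hm,
      List.sum_take_succ _ _ hm]
    rw [add_mul, ← ih (by omega)]
    omega

end Layers

lemma card_le_sSup_card {α : Type*} [Fintype α] {P : Finset α → Prop} {σ : Finset α}
    (h : P σ) : σ.card ≤ sSup {z | ∃ π, P π ∧ π.card = z} :=
  le_csSup ⟨Fintype.card α, by rintro _ ⟨π, -, rfl⟩; exact card_le_univ π⟩ ⟨σ, h, rfl⟩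

lemma sSup_card_le {α : Type*} {P : Finset α → Prop} {N : ℕ} (hP : ∃ σ, P σ)
    (h : ∀ π, P π → π.card ≤ N) : sSup {z | ∃ π, P π ∧ π.card = z} ≤ N :=
  csSup_le (let ⟨σ, hσ⟩ := hP; ⟨_, σ, hσ, rfl⟩) (by rintro _ ⟨π, hπ, rfl⟩; exact h π hπ)

lemma injOn_fst_of_card_filter_le_one {α β : Type*} [DecidableEq α] {π : Finset (α × β)}
    (h : ∀ a, #(π.filter (·.1 = a)) ≤ 1) : Set.InjOn Prod.fst (π : Set (α × β)) :=
  fun x hx y hy hxy =>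
    card_le_one.1 (h x.1) x (mem_filter.2 ⟨hx, rfl⟩) y (mem_filter.2 ⟨hy, hxy.symm⟩)

lemma card_filter_union_le {α : Type*} [DecidableEq α] {s t : Finset α} {p : α → Prop}
    [DecidablePred p] {N : ℕ} (hs : #(s.filter p) ≤ N) (ht : #(t.filter p) ≤ N)
    (hst : ∀ x ∈ s, ∀ y ∈ t, p x → ¬ p y) : #((s ∪ t).filter p) ≤ N := by
  rw [filter_union]
  by_cases hempty : s.filter p = ∅
  · rwa [hempty, empty_union]
  · obtain ⟨x, hx⟩ := nonempty_iff_ne_empty.2 hempty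
    rw [mem_filter] at hx
    rwa [filter_false_of_mem fun y hy => hst x hx.1 y hy hx.2, union_empty]

section Allocation

variable {J T K : Type*} [DecidableEq K]

lemma alloc_union [DecidableEq J] [DecidableEq T] {s t : Finset (J × T × K)} (h : Disjoint s t)
    (k : K) : alloc (s ∪ t) k = alloc s k + alloc t k := by
  rw [alloc, filter_union, card_union_of_disjoint (disjoint_filter_filter h)]
  rfl

lemma cost_union [DecidableEq J] [DecidableEq T] (c : J → T → K → ℕ) {s t : Finset (J × T × K)}
    (h : Disjoint s t) : cost c (s ∪ t) = cost c s + cost c t :=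
  sum_union h

lemma sum_alloc_eq_card_filter (π : Finset (J × T × K)) (S : Finset K) :
    ∑ k ∈ S, alloc π k = #(π.filter (·.2.2 ∈ S)) := by
  rw [card_eq_sum_card_fiberwise (s := π.filter (·.2.2 ∈ S)) (t := S) (f := fun x => x.2.2)
    fun x hx => (mem_filter.1 hx).2]
  refine sum_congr rfl fun k hk => ?_
  rw [alloc, filter_filter]
  exact congrArg card (filter_congr fun x _ => ⟨fun h => ⟨h ▸ hk, h⟩, And.right⟩)

variable [Fintype K]

lemma card_eq_sum_alloc (π : Finset (J × T × K)) : π.card = ∑ k, alloc π k := by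
  simpa using (sum_alloc_eq_card_filter π univ).symm

lemma alloc_eq_of_sum_eq {π : Finset (J × T × K)} {N : ℕ} (h : ∀ k, alloc π k ≤ N)
    (hcard : π.card = Fintype.card K * N) (k : K) : alloc π k = N := by
  have hsum : ∑ k, alloc π k = ∑ _k : K, N := by
    rw [← card_eq_sum_alloc, hcard, sum_const, card_univ, smul_eq_mul]
  exact (sum_eq_sum_iff_of_le fun k _ => h k).1 hsum k (mem_univ k)

lemma coe_sortedVec (π : Finset (J × T × K)) :
    (sortedVec π : Multiset ℕ) = univ.val.map (alloc π) :=
  Multiset.sort_eq _ _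

lemma sortedVec_pairwise (π : Finset (J × T × K)) : (sortedVec π).Pairwise (· ≤ ·) :=
  Multiset.pairwise_sort _ _

lemma length_sortedVec (π : Finset (J × T × K)) : (sortedVec π).length = Fintype.card K := by
  simp [sortedVec]

lemma sum_sortedVec (π : Finset (J × T × K)) : (sortedVec π).sum = π.card := by
  rw [← Multiset.sum_coe, coe_sortedVec, card_eq_sum_alloc]
  rfl

lemma alloc_mem_sortedVec (π : Finset (J × T × K)) (k : K) : alloc π k ∈ sortedVec π := by
  rw [← Multiset.mem_coe, coe_sortedVec]
  exact Multiset.mem_map_of_mem _ (mem_univ k)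

lemma length_filter_sortedVec_lt (π : Finset (J × T × K)) (v : ℕ) :
    ((sortedVec π).filter (· < v)).length = #{k | alloc π k < v} := by
  rw [← List.countP_eq_length_filter, ← Multiset.coe_countP, coe_sortedVec, Multiset.countP_map]
  rfl

lemma exists_card_eq_sum_alloc_eq_take_sum (π : Finset (J × T × K)) {m : ℕ}
    (hm : m ≤ Fintype.card K) :
    ∃ S : Finset K, #S = m ∧ ∑ k ∈ S, alloc π k = ((sortedVec π).take m).sum := by
  have hperm : (sortedVec π).Perm (univ.toList.map (alloc π)) := by
    rw [← Multiset.coe_eq_coe, coe_sortedVec, ← coe_toList univ, Multiset.map_coe]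
  obtain ⟨u, hu_perm, hu_sub⟩ := (List.take_sublist m _).subperm.trans hperm.subperm
  obtain ⟨ks, hks_sub, rfl⟩ := List.sublist_map_iff.1 hu_sub
  have hnodup : ks.Nodup := (nodup_toList _).sublist hks_sub
  refine ⟨ks.toFinset, ?_, by rw [List.sum_toFinset _ hnodup]; exact hu_perm.sum_eq⟩
  have := hu_perm.length_eq
  rw [List.length_map, List.length_take, length_sortedVec] at this
  rw [List.toFinset_card_of_nodup hnodup]
  omega

end Allocation

section Feasible

variable {J T K : Type*} [DecidableEq J] [DecidableEq T] [DecidableEq K]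
  {b : J → T → K → Prop} {n : K → T → ℕ}

lemma Feasible.injOn_fst {π : Finset (J × T × K)} (h : Feasible b n π) :
    Set.InjOn Prod.fst (π : Set (J × T × K)) :=
  injOn_fst_of_card_filter_le_one h.2.1

lemma Feasible.card_filter_time_le {π : Finset (J × T × K)} (h : Feasible b n π) (t : T)
    (S : Finset K) : #(π.filter fun x => x.2.1 = t ∧ x.2.2 ∈ S) ≤ ∑ k ∈ S, n k t := by
  rw [card_eq_sum_card_fiberwise (f := fun x => x.2.2) (t := S)
    fun x hx => (mem_filter.1 hx).2.2]
  refine sum_le_sum fun k _ => le_trans (card_le_card fun x hx => ?_) (h.2.2 k t)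
  simp only [mem_filter] at hx ⊢
  exact ⟨hx.1.1, hx.1.2.1, hx.2⟩

lemma Feasible.union {s t : Finset (J × T × K)} (hs : Feasible b n s) (ht : Feasible b n t)
    (hjob : ∀ x ∈ s, ∀ y ∈ t, x.1 ≠ y.1) (htime : ∀ x ∈ s, ∀ y ∈ t, x.2.1 ≠ y.2.1) :
    Feasible b n (s ∪ t) := by
  refine ⟨fun x hx => (mem_union.1 hx).elim (hs.1 x) (ht.1 x), fun j => ?_, fun k t' => ?_⟩
  · exact card_filter_union_le (hs.2.1 j) (ht.2.1 j) fun x hx y hy hxj hyj =>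
      hjob x hx y hy (hxj.trans hyj.symm)
  · exact card_filter_union_le (hs.2.2 k t') (ht.2.2 k t') fun x hx y hy hxt hyt =>
      htime x hx y hy (hxt.1.trans hyt.1.symm)

variable [Fintype K] {φf : List ℕ} {π₀ σ : Finset (J × T × K)}

lemma MaxLexminFair.sortedVec_eq {π₁ π₂ : Finset (J × T × K)} (h₁ : MaxLexminFair b n π₁)
    (h₂ : MaxLexminFair b n π₂) : sortedVec π₁ = sortedVec π₂ :=
  (h₂.2.2 π₁ h₁.1 h₁.2.1).resolve_right fun hlt =>
    ((h₁.2.2 π₂ h₂.1 h₂.2.1).elim (fun heq => irrefl _ (heq ▸ hlt)) (asymm hlt))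

lemma MaxLexminFair.of_sortedVec_eq (hπ₀ : MaxLexminFair b n π₀) (hσ : Feasible b n σ)
    (hcard : σ.card = Zmax b n) (hvec : sortedVec σ = sortedVec π₀) : MaxLexminFair b n σ :=
  ⟨hσ, hcard, fun π hπ hπc => hvec ▸ hπ₀.2.2 π hπ hπc⟩

lemma MaxLexminFair.sortedVec_eq_of_take_sum_le (hπ₀ : MaxLexminFair b n π₀)
    (hσ : Feasible b n σ) (hcard : σ.card = Zmax b n)
    (h : ∀ m ≤ Fintype.card K, ((sortedVec π₀).take m).sum ≤ ((sortedVec σ).take m).sum) :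
    sortedVec σ = sortedVec π₀ := by
  refine (hπ₀.2.2 σ hσ hcard).resolve_right fun hlex => ?_
  obtain ⟨m, hm, hlt⟩ := List.exists_take_sum_lt_of_lex hlex (by simp [length_sortedVec])
  rw [length_sortedVec] at hm
  exact (h m hm).not_gt hlt

lemma zmax_add_card_dummy (hπ₀ : MaxLexminFair b n π₀) (hvec : sortedVec π₀ = φf) :
    Zmax b n + Fintype.card (Dummy φf) = Fintype.card K * φf.getLast! := by
  have hs := hvec ▸ sortedVec_pairwise π₀
  have hlen : φf.length = Fintype.card K := hvec ▸ length_sortedVec π₀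
  have hlayer : ∀ l : Fin (Ldim φf), min (layerSize φf l) (Fintype.card K) = layerSize φf l :=
    fun l => min_eq_left (hlen ▸ List.length_filter_le _ _)
  have hsum : φf.sum = Zmax b n := by rw [← hvec, sum_sortedVec, hπ₀.2.1]
  have := take_sum_add_sum_min_layerSize hs hlen.ge
  rw [List.take_of_length_le hlen.le, hsum, sum_congr rfl fun l _ => hlayer l] at this
  simpa [Fintype.card_sigma] using this

end Feasible

section Embedding

variable {J T K D T' : Type*}

lemma embTriple_injective : (embTriple : J × T × K → (J ⊕ D) × (T ⊕ T') × K).Injective := by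
  rintro ⟨j, t, k⟩ ⟨j', t', k'⟩ h
  simpa [embTriple] using h

def dummyPart (π' : Finset ((J ⊕ D) × (T ⊕ T') × K)) : Finset ((J ⊕ D) × (T ⊕ T') × K) :=
  π'.filter (·.1.isRight)

lemma isRight_of_mem_dummyPart {π' : Finset ((J ⊕ D) × (T ⊕ T') × K)}
    {x : (J ⊕ D) × (T ⊕ T') × K} (hx : x ∈ dummyPart π') : x.1.isRight :=
  (mem_filter.1 hx).2

variable [DecidableEq J] [DecidableEq T] [DecidableEq K]

lemma mem_restrict {π' : Finset ((J ⊕ D) × (T ⊕ T') × K)} {x : J × T × K} :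
    x ∈ restrict π' ↔ embTriple x ∈ π' := by
  simp only [restrict, mem_filterMap]
  constructor
  · rintro ⟨⟨j | d, t | l, k⟩, hmem, h⟩ <;> simp only [Option.some.injEq, reduceCtorEq] at h
    subst h
    exact hmem
  · exact fun h => ⟨_, h, rfl⟩

lemma card_filter_restrict_le {π' : Finset ((J ⊕ D) × (T ⊕ T') × K)}
    {p : J × T × K → Prop} [DecidablePred p] {q : (J ⊕ D) × (T ⊕ T') × K → Prop}
    [DecidablePred q] (hpq : ∀ x, p x → q (embTriple x)) :
    #((restrict π').filter p) ≤ #(π'.filter q) :=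
  card_le_card_of_injOn embTriple
    (fun x hx => mem_filter.2 ⟨mem_restrict.1 (mem_filter.1 hx).1, hpq x (mem_filter.1 hx).2⟩)
    embTriple_injective.injOn

variable [DecidableEq D] [DecidableEq T']

lemma disjoint_image_embTriple (s : Finset (J × T × K)) {t : Finset ((J ⊕ D) × (T ⊕ T') × K)}
    (ht : ∀ x ∈ t, x.1.isRight) : Disjoint (s.image embTriple) t := by
  refine disjoint_left.2 fun x hx hxt => ?_
  obtain ⟨y, -, rfl⟩ := mem_image.1 hx
  simpa [embTriple] using ht _ hxt

lemma alloc_image_embTriple (s : Finset (J × T × K)) (k : K) :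
    alloc (s.image (embTriple : _ → (J ⊕ D) × (T ⊕ T') × K)) k = alloc s k := by
  rw [alloc, filter_image, card_image_of_injective _ embTriple_injective]
  rfl

lemma card_filter_image_embTriple (s : Finset (J × T × K))
    (q : (J ⊕ D) × (T ⊕ T') × K → Prop) [DecidablePred q] :
    #((s.image embTriple).filter q) = #(s.filter fun x => q (embTriple x)) := by
  rw [filter_image, card_image_of_injective _ embTriple_injective]

end Embedding

section Augmented

variable {J T K : Type*} {b : J → T → K → Prop} {n : K → T → ℕ} {φf : List ℕ}

lemma cost_costAug_eq_zero (c : J → T → K → ℕ)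
    {t : Finset ((J ⊕ Dummy φf) × (T ⊕ Fin (Ldim φf)) × K)} (ht : ∀ x ∈ t, x.1.isRight) :
    cost (costAug c φf) t = 0 := by
  refine sum_eq_zero fun x hx => ?_
  obtain ⟨j | d, t, k⟩ := x
  · simpa using ht _ hx
  · rfl

variable [DecidableEq J] [DecidableEq T] [DecidableEq K]
  {π' : Finset ((J ⊕ Dummy φf) × (T ⊕ Fin (Ldim φf)) × K)}

lemma cost_image_embTriple (c : J → T → K → ℕ) (s : Finset (J × T × K)) :
    cost (costAug c φf) (s.image embTriple) = cost c s :=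
  sum_image fun _ _ _ _ h => embTriple_injective h

lemma image_embTriple_restrict_union_dummyPart (hb : ∀ x ∈ π', bidAug b φf x.1 x.2.1 x.2.2) :
    (restrict π').image embTriple ∪ dummyPart π' = π' := by
  simp only [bidAug] at hb
  ext x
  obtain ⟨j | d, t | l, k⟩ := x
  · simp [dummyPart, mem_restrict, embTriple]
  · simpa [dummyPart, embTriple] using fun h => hb (Sum.inl j, Sum.inr l, k) h
  · simp [dummyPart, embTriple]
  · simp [dummyPart, embTriple]

lemma card_restrict_add_card_dummyPart (hb : ∀ x ∈ π', bidAug b φf x.1 x.2.1 x.2.2) :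
    (restrict π').card + (dummyPart π').card = π'.card := by
  conv_rhs => rw [← image_embTriple_restrict_union_dummyPart hb]
  rw [card_union_of_disjoint (disjoint_image_embTriple _ fun _ => isRight_of_mem_dummyPart),
    card_image_of_injective _ embTriple_injective]

lemma alloc_restrict_add_alloc_dummyPart (hb : ∀ x ∈ π', bidAug b φf x.1 x.2.1 x.2.2) (k : K) :
    alloc (restrict π') k + alloc (dummyPart π') k = alloc π' k := by
  conv_rhs => rw [← image_embTriple_restrict_union_dummyPart hb]
  rw [alloc_union (disjoint_image_embTriple _ fun _ => isRight_of_mem_dummyPart),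
    alloc_image_embTriple]

lemma cost_costAug_eq_cost_restrict (hb : ∀ x ∈ π', bidAug b φf x.1 x.2.1 x.2.2)
    (c : J → T → K → ℕ) : cost (costAug c φf) π' = cost c (restrict π') := by
  conv_lhs => rw [← image_embTriple_restrict_union_dummyPart hb]
  rw [cost_union _ (disjoint_image_embTriple _ fun _ => isRight_of_mem_dummyPart),
    cost_image_embTriple, cost_costAug_eq_zero c fun _ => isRight_of_mem_dummyPart, add_zero]

lemma Feasible.restrict (h : Feasible (bidAug b φf) (capAug n φf) π') :
    Feasible b n (restrict π') :=
  ⟨fun x hx => h.1 _ (mem_restrict.1 hx),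
    fun j => (card_filter_restrict_le (q := (·.1 = Sum.inl j)) fun x hx => by
      simp [embTriple, hx]).trans (h.2.1 _),
    fun k t => (card_filter_restrict_le (q := fun x => x.2.1 = Sum.inl t ∧ x.2.2 = k)
      fun x hx => by simpa [embTriple] using hx).trans (h.2.2 k _)⟩

lemma Feasible.image_embTriple {σ : Finset (J × T × K)} (h : Feasible b n σ) :
    Feasible (bidAug b φf) (capAug n φf) (σ.image embTriple) := by
  refine ⟨?_, fun jd => ?_, fun k t' => ?_⟩
  · simp only [mem_image]
    rintro _ ⟨x, hx, rfl⟩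
    exact h.1 x hx
  · rw [card_filter_image_embTriple]
    cases jd with
    | inl j => simpa [embTriple] using h.2.1 j
    | inr d => simp [embTriple]
  · rw [card_filter_image_embTriple]
    cases t' with
    | inl t => simpa [embTriple, capAug] using h.2.2 k t
    | inr l => simp [embTriple]

lemma card_dummyPart_le (h : Feasible (bidAug b φf) (capAug n φf) π') :
    #(dummyPart π') ≤ Fintype.card (Dummy φf) := by
  rw [← card_univ, ← card_image_of_injective univ (Sum.inr_injective (α := J))]
  refine card_le_card_of_injOn Prod.fst (fun x hx => ?_)
    (h.injOn_fst.mono (filter_subset _ _))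
  obtain ⟨d, hd⟩ := Sum.isRight_iff.1 (isRight_of_mem_dummyPart hx)
  simp [hd]

lemma card_filter_dummyTime_le (h : Feasible (bidAug b φf) (capAug n φf) π')
    (l : Fin (Ldim φf)) : #(π'.filter (·.2.1 = Sum.inr l)) ≤ layerSize φf l := by
  have hinj : (fun i : Fin (layerSize φf l) => (Sum.inr ⟨l, i⟩ : J ⊕ Dummy φf)).Injective :=
    fun i i' hi => by simpa using hi
  rw [← Fintype.card_fin (layerSize φf l), ← card_univ, ← card_image_of_injective univ hinj]
  refine card_le_card_of_injOn Prod.fst (fun x hx => ?_)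
    (h.injOn_fst.mono (filter_subset _ _))
  obtain ⟨hmem, htime⟩ := mem_filter.1 hx
  have hbid := h.1 x hmem
  obtain ⟨j | ⟨l', i⟩, t, k⟩ := x
  · simp only at htime
    subst htime
    exact hbid.elim
  · simp only at htime hbid
    subst htime
    subst hbid
    simp

lemma sum_alloc_dummyPart_le (h : Feasible (bidAug b φf) (capAug n φf) π') (S : Finset K) :
    ∑ k ∈ S, alloc (dummyPart π') k ≤ ∑ l : Fin (Ldim φf), min (layerSize φf l) #S := by
  calc ∑ k ∈ S, alloc (dummyPart π') k = #((dummyPart π').filter (·.2.2 ∈ S)) :=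
        sum_alloc_eq_card_filter _ S
    _ ≤ #(univ.biUnion fun l => π'.filter fun x => x.2.1 = Sum.inr l ∧ x.2.2 ∈ S) := by
        refine card_le_card fun x hx => ?_
        obtain ⟨hx, hS⟩ := mem_filter.1 hx
        obtain ⟨hmem, hright⟩ := mem_filter.1 hx
        have hbid := h.1 x hmem
        obtain ⟨j | d, t | l, k⟩ := x
        · simp at hright
        · simp at hright
        · exact hbid.elim
        · simp [hmem, hS]
    _ ≤ ∑ l, #(π'.filter fun x => x.2.1 = Sum.inr l ∧ x.2.2 ∈ S) := card_biUnion_le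
    _ ≤ ∑ l : Fin (Ldim φf), min (layerSize φf l) #S := by
        refine sum_le_sum fun l _ => le_min ?_ ?_
        · exact (card_le_card (monotone_filter_right _ fun _ _ h => h.1)).trans
            (card_filter_dummyTime_le h l)
        · simpa [capAug] using h.card_filter_time_le (Sum.inr l) S

lemma take_sum_le_take_sum_sortedVec_restrict [Fintype K]
    (h : Feasible (bidAug b φf) (capAug n φf) π') (hfull : ∀ k, alloc π' k = φf.getLast!) (hs : φf.Pairwise (· ≤ ·))
    (hlen : φf.length = Fintype.card K) {m : ℕ} (hm : m ≤ Fintype.card K) :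
    (φf.take m).sum ≤ ((sortedVec (restrict π')).take m).sum := by
  obtain ⟨S, hS, hsum⟩ := exists_card_eq_sum_alloc_eq_take_sum (restrict π') hm
  have hsplit : ∑ k ∈ S, alloc (restrict π') k + ∑ k ∈ S, alloc (dummyPart π') k =
      m * φf.getLast! := by
    rw [← sum_add_distrib, sum_congr rfl fun k _ =>
      (alloc_restrict_add_alloc_dummyPart h.1 k).trans (hfull k), sum_const, hS, smul_eq_mul]
  have hdummy := sum_alloc_dummyPart_le h S
  have hlayers := take_sum_add_sum_min_layerSize hs (hlen ▸ hm)
  rw [hS] at hdummy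
  omega

end Augmented

section Extension

variable {J T K : Type*} [DecidableEq K] {φf : List ℕ}

lemma exists_dummy_assignment [Fintype K] {σ : Finset (J × T × K)} (hvec : sortedVec σ = φf) :
    ∃ g : Dummy φf → K, (∀ d d' : Dummy φf, d.1 = d'.1 → g d = g d' → d = d') ∧
      ∀ d : Dummy φf, alloc σ (g d) < φf.head! + d.1 + 1 := by
  have hcard : ∀ l : Fin (Ldim φf),
      #{k | alloc σ k < φf.head! + l + 1} = layerSize φf l := fun l => by
    rw [layerSize, ← length_filter_sortedVec_lt, hvec]
  let e := fun l : Fin (Ldim φf) =>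
    ({k | alloc σ k < φf.head! + l + 1} : Finset K).equivFinOfCardEq (hcard l)
  refine ⟨fun d => (e d.1).symm d.2, ?_, fun d => (mem_filter.1 ((e d.1).symm d.2).2).2⟩
  rintro ⟨l, i⟩ ⟨l', i'⟩ (rfl : l = l') h
  rw [show i = i' from (e l).symm.injective (Subtype.ext h)]

variable [DecidableEq J] [DecidableEq T] {b : J → T → K → Prop} {n : K → T → ℕ}
  {g : Dummy φf → K}

def dummyTriples (g : Dummy φf → K) : Finset ((J ⊕ Dummy φf) × (T ⊕ Fin (Ldim φf)) × K) :=
  univ.image fun d => (Sum.inr d, Sum.inr d.1, g d)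

lemma mem_dummyTriples {x : (J ⊕ Dummy φf) × (T ⊕ Fin (Ldim φf)) × K} :
    x ∈ (dummyTriples g : Finset ((J ⊕ Dummy φf) × (T ⊕ Fin (Ldim φf)) × K)) ↔
      ∃ d, (Sum.inr d, Sum.inr d.1, g d) = x := by
  simp [dummyTriples]

lemma card_dummyTriples :
    #(dummyTriples g : Finset ((J ⊕ Dummy φf) × (T ⊕ Fin (Ldim φf)) × K)) =
      Fintype.card (Dummy φf) :=
  card_image_of_injective _ fun d d' h => by simpa using congrArg Prod.fst h

lemma alloc_dummyTriples (k : K) :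
    alloc (dummyTriples g : Finset ((J ⊕ Dummy φf) × (T ⊕ Fin (Ldim φf)) × K)) k =
      #{d | g d = k} := by
  rw [alloc, dummyTriples, filter_image,
    card_image_of_injective _ fun d d' h => by simpa using congrArg Prod.fst h]

lemma feasible_dummyTriples (hg : ∀ d d' : Dummy φf, d.1 = d'.1 → g d = g d' → d = d') :
    Feasible (bidAug b φf) (capAug n φf) (dummyTriples g) := by
  refine ⟨fun x hx => ?_, fun jd => card_le_one.2 fun x hx y hy => ?_, fun k t => ?_⟩
  · obtain ⟨d, rfl⟩ := mem_dummyTriples.1 hx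
    rfl
  · obtain ⟨⟨d, rfl⟩, hd⟩ := (mem_filter.1 hx).imp_left mem_dummyTriples.1
    obtain ⟨⟨d', rfl⟩, hd'⟩ := (mem_filter.1 hy).imp_left mem_dummyTriples.1
    simp only [← hd', Sum.inr.injEq] at hd
    rw [hd]
  · cases t with
    | inl t => simp [dummyTriples, filter_image]
    | inr l =>
      refine card_le_one.2 fun x hx y hy => ?_
      obtain ⟨⟨d, rfl⟩, hl, hk⟩ := (mem_filter.1 hx).imp_left mem_dummyTriples.1
      obtain ⟨⟨d', rfl⟩, hl', hk'⟩ := (mem_filter.1 hy).imp_left mem_dummyTriples.1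
      simp only [Sum.inr.injEq] at hl hl' hk hk'
      rw [hg d d' (hl.trans hl'.symm) (hk.trans hk'.symm)]

lemma exists_feasibleAug_extension [Fintype K] (c : J → T → K → ℕ) {σ : Finset (J × T × K)}
    (hσ : Feasible b n σ) (hvec : sortedVec σ = φf) :
    ∃ σ' : Finset ((J ⊕ Dummy φf) × (T ⊕ Fin (Ldim φf)) × K), FeasibleAug b n φf σ' ∧
      σ'.card = σ.card + Fintype.card (Dummy φf) ∧ cost (costAug c φf) σ' = cost c σ := by
  obtain ⟨g, hg, hgσ⟩ := exists_dummy_assignment hvec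
  have hright : ∀ x ∈ (dummyTriples g : Finset ((J ⊕ Dummy φf) × (T ⊕ Fin (Ldim φf)) × K)),
      x.1.isRight ∧ x.2.1.isRight := fun x hx => by
    obtain ⟨d, rfl⟩ := mem_dummyTriples.1 hx
    simp
  have hdisj := disjoint_image_embTriple σ fun x hx => (hright x hx).1
  refine ⟨σ.image embTriple ∪ dummyTriples g, ⟨?_, fun k => ?_⟩, ?_, ?_⟩
  · refine hσ.image_embTriple.union (feasible_dummyTriples hg) ?_ ?_ <;>
      simp only [mem_image] <;> rintro _ ⟨x, -, rfl⟩ y hy h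
    · simpa [embTriple, ← h] using (hright y hy).1
    · simpa [embTriple, ← h] using (hright y hy).2
  · have hle : #{d | g d = k} ≤ #{l : Fin (Ldim φf) | alloc σ k < φf.head! + l + 1} :=
      card_le_card_of_injOn Sigma.fst (fun d hd => by simpa [← (mem_filter.1 hd).2] using hgσ d)
        fun d hd d' hd' h => hg d d' h (((mem_filter.1 hd).2).trans (mem_filter.1 hd').2.symm)
    have hk : alloc σ k ≤ φf.getLast! :=
      le_getLast!_of_mem (hvec ▸ sortedVec_pairwise σ) (hvec ▸ alloc_mem_sortedVec σ k)
    rw [alloc_union hdisj, alloc_image_embTriple, alloc_dummyTriples]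
    have := card_layers_above_add_le hk
    omega
  · rw [card_union_of_disjoint hdisj, card_image_of_injective _ embTriple_injective,
      card_dummyTriples]
  · rw [cost_union _ hdisj, cost_image_embTriple,
      cost_costAug_eq_zero c fun x hx => (hright x hx).1, add_zero]

end Extension

section Main

variable {J T K : Type*} [Fintype J] [Fintype T] [Fintype K]
  [DecidableEq J] [DecidableEq T] [DecidableEq K]
  {b : J → T → K → Prop} {n : K → T → ℕ} {φf : List ℕ} {π₀ : Finset (J × T × K)}
  {π' : Finset ((J ⊕ Dummy φf) × (T ⊕ Fin (Ldim φf)) × K)}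

lemma card_le_zmax {σ : Finset (J × T × K)} (h : Feasible b n σ) : σ.card ≤ Zmax b n :=
  card_le_sSup_card h

lemma zmaxAug_eq (hπ₀ : MaxLexminFair b n π₀) (hvec : sortedVec π₀ = φf) :
    ZmaxAug b n φf = Zmax b n + Fintype.card (Dummy φf) := by
  obtain ⟨σ', hσ', hcard, -⟩ := exists_feasibleAug_extension (fun _ _ _ => 0) hπ₀.1 hvec
  refine le_antisymm (sSup_card_le ⟨σ', hσ'⟩ fun τ hτ => ?_) ?_
  · rw [← card_restrict_add_card_dummyPart hτ.1.1]
    exact add_le_add (card_le_zmax hτ.1.restrict) (card_dummyPart_le hτ.1)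
  · rw [← hπ₀.2.1, ← hcard]
    exact card_le_sSup_card hσ'

lemma card_restrict_eq_zmax (hπ₀ : MaxLexminFair b n π₀) (hvec : sortedVec π₀ = φf)
    (hfeas' : FeasibleAug b n φf π') (hmax' : π'.card = ZmaxAug b n φf) :
    (restrict π').card = Zmax b n := by
  have hsplit := card_restrict_add_card_dummyPart hfeas'.1.1
  have hreal := card_le_zmax hfeas'.1.restrict
  have hdummy := card_dummyPart_le hfeas'.1
  rw [hmax', zmaxAug_eq hπ₀ hvec] at hsplit
  omega

lemma sortedVec_restrict_eq (hπ₀ : MaxLexminFair b n π₀) (hvec : sortedVec π₀ = φf)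
    (hfeas' : FeasibleAug b n φf π') (hmax' : π'.card = ZmaxAug b n φf) :
    sortedVec (restrict π') = φf := by
  have hfull : ∀ k, alloc π' k = φf.getLast! := alloc_eq_of_sum_eq hfeas'.2 <| by
    rw [hmax', zmaxAug_eq hπ₀ hvec, zmax_add_card_dummy hπ₀ hvec]
  have hs : φf.Pairwise (· ≤ ·) := hvec ▸ sortedVec_pairwise π₀
  have hlen : φf.length = Fintype.card K := hvec ▸ length_sortedVec π₀
  refine (hπ₀.sortedVec_eq_of_take_sum_le hfeas'.1.restrict
    (card_restrict_eq_zmax hπ₀ hvec hfeas' hmax') fun m hm => ?_).trans hvec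
  rw [hvec]
  exact take_sum_le_take_sum_sortedVec_restrict hfeas'.1 hfull hs hlen hm

end Main

theorem dummyFlow_correct_general {J T K : Type*}
    [Fintype J] [Fintype T] [Fintype K]
    [DecidableEq J] [DecidableEq T] [DecidableEq K]
    (b : J → T → K → Prop) (c : J → T → K → ℕ) (n : K → T → ℕ)
    (φf : List ℕ) (hφf : ∃ π₀ : Finset (J × T × K),
      MaxLexminFair b n π₀ ∧ sortedVec π₀ = φf)
    (π' : Finset ((J ⊕ Dummy φf) × (T ⊕ Fin (Ldim φf)) × K))
    (hfeas' : FeasibleAug b n φf π') (hmax' : π'.card = ZmaxAug b n φf)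
    (hmin' : ∀ σ' : Finset ((J ⊕ Dummy φf) × (T ⊕ Fin (Ldim φf)) × K),
      FeasibleAug b n φf σ' → σ'.card = ZmaxAug b n φf →
        cost (costAug c φf) π' ≤ cost (costAug c φf) σ') :
    Feasible b n (restrict π') ∧
      (restrict π').card = Zmax b n ∧
      MaxLexminFair b n (restrict π') ∧
      ∀ σ : Finset (J × T × K), MaxLexminFair b n σ →
        cost c (restrict π') ≤ cost c σ := by
  obtain ⟨π₀, hπ₀, hvec⟩ := hφf
  have hres : Feasible b n (restrict π') := hfeas'.1.restrict
  have hcard := card_restrict_eq_zmax hπ₀ hvec hfeas' hmax'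
  have hfair := hπ₀.of_sortedVec_eq hres hcard
    ((sortedVec_restrict_eq hπ₀ hvec hfeas' hmax').trans hvec.symm)
  refine ⟨hres, hcard, hfair, fun σ hσ => ?_⟩
  obtain ⟨σ', hσ', hσ'card, hσ'cost⟩ :=
    exists_feasibleAug_extension c hσ.1 ((hσ.sortedVec_eq hπ₀).trans hvec)
  calc cost c (restrict π') = cost (costAug c φf) π' :=
        (cost_costAug_eq_cost_restrict hfeas'.1.1 c).symm
    _ ≤ cost (costAug c φf) σ' := hmin' σ' hσ' (by rw [hσ'card, hσ.2.1, zmaxAug_eq hπ₀ hvec])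
    _ = cost c σ := hσ'cost

/-- Lemma 4, main correctness result: removing the dummy jobs
from a minimum-cost maximum allocation of the dummy-augmented instance `P'`
yields an optimal solution to the max-lexmin fair minimum cost allocation
problem for `P`. -/
theorem dummyFlow_correct {J T K : Type*}
    [Fintype J] [Fintype T] [Fintype K] [Nonempty J] [Nonempty T] [Nonempty K]
    [DecidableEq J] [DecidableEq T] [DecidableEq K]
    (b : J → T → K → Prop) (c : J → T → K → ℕ) (n : K → T → ℕ)
    (φf : List ℕ) (hφf : ∃ π₀ : Finset (J × T × K),
      MaxLexminFair b n π₀ ∧ sortedVec π₀ = φf)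
    (π' : Finset ((J ⊕ Dummy φf) × (T ⊕ Fin (Ldim φf)) × K))
    (hfeas' : FeasibleAug b n φf π') (hmax' : π'.card = ZmaxAug b n φf)
    (hmin' : ∀ σ' : Finset ((J ⊕ Dummy φf) × (T ⊕ Fin (Ldim φf)) × K),
      FeasibleAug b n φf σ' → σ'.card = ZmaxAug b n φf →
        cost (costAug c φf) π' ≤ cost (costAug c φf) σ') :
    Feasible b n (restrict π') ∧
      (restrict π').card = Zmax b n ∧
      MaxLexminFair b n (restrict π') ∧
      ∀ σ : Finset (J × T × K), MaxLexminFair b n σ →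
        cost c (restrict π') ≤ cost c σ :=
  dummyFlow_correct_general b c n φf hφf π' hfeas' hmax' hmin'
end
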